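/- arXiv:1402.5237 — 2 statements merged into one kernel-verified Lean document; each statement's English description precedes it below -/
import Mathlib

section
/- Let p ≥ 2 be an even integer and K > 1/p. The region B = {(ū, η̄) : ū < 0, −ū^p ≤ η̄ ≤ −ū^p − K/ū^{p−1}} is positively invariant for the planar flow η̄' = 1, ū' = η̄ + ū^p (equivalently, for the orbit equation dη̄/dū = 1/(η̄ + ū^p)): on the boundary η̄ = −ū^p the vector field is (1, 0) pointing into B, and on the boundary η̄ = −ū^p − K/ū^{p−1}, the inner product of the vector field with the exterior normal (1, pū^{p−1} + K(1−p)/ū^p) equals 1 − Kp − K²(1−p)/ū^{2p−1}, which is strictly negative since K > 1/p, p even and ū < 0. -/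
open Set

/-!
Both boundary curves are handled by the same barrier argument: a function `g` with `g ≥ 0`
initially, whose derivative is positive whenever `g = 0`, stays nonnegative. For the lower
boundary take `g = η + u ^ p`, whose derivative along the flow is `1` where `g = 0`. For the
upper boundary `η = -u ^ p - K / u ^ (p - 1)` the derivative of `g = -u ^ p - K / u ^ (p - 1) - η`
is minus the inner product of the field with the exterior normal, which on the curve equals
`K p - 1 + K² (1 - p) / u ^ (2p - 1) > 0`, since `K p > 1` and `u ^ (2p - 1) < 0`.
-/

theorem nonneg_of_hasDerivAt_pos_of_eq_zero {g g' : ℝ → ℝ} {a b : ℝ}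
    (hg : ∀ t ∈ Icc a b, HasDerivAt g (g' t) t) (ha : 0 ≤ g a)
    (hpos : ∀ t ∈ Icc a b, g t = 0 → 0 < g' t) :
    ∀ t ∈ Icc a b, 0 ≤ g t := fun _ ht =>
  image_le_of_deriv_right_lt_deriv_boundary' (f := 0) (f' := 0) continuousOn_const
    (fun _ _ => hasDerivWithinAt_const _ _ _) ha
    (fun t ht => (hg t ht).continuousAt.continuousWithinAt)
    (fun t ht => (hg t (Ico_subset_Icc_self ht)).hasDerivWithinAt)
    (fun t ht h => hpos t (Ico_subset_Icc_self ht) h.symm) ht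

theorem pow_sub_one_neg_of_even {p : ℕ} (hpe : Even p) (hp : p ≠ 0) {u : ℝ} (hu : u < 0) :
    u ^ (p - 1) < 0 :=
  (Nat.Even.sub_odd (Nat.one_le_iff_ne_zero.2 hp) hpe odd_one).pow_neg hu

theorem hasDerivAt_div_pow_sub_one {p : ℕ} (hp : p ≠ 0) (K : ℝ) {u : ℝ} (hu : u ≠ 0) :
    HasDerivAt (fun u : ℝ => K / u ^ (p - 1)) (K * (1 - p) / u ^ p) u := by
  have e₁ : (1 - p : ℤ) = -((p - 1 : ℕ) : ℤ) := by omega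
  have e₂ : (1 - p - 1 : ℤ) = -(p : ℤ) := by omega
  have hf : (fun u : ℝ => K / u ^ (p - 1)) = fun u => K * u ^ (1 - p : ℤ) := by
    funext v
    rw [e₁, zpow_neg, zpow_natCast, div_eq_mul_inv]
  rw [hf]
  refine ((hasDerivAt_zpow (1 - p : ℤ) u (.inl hu)).const_mul K).congr_deriv ?_
  rw [e₂, zpow_neg, zpow_natCast]
  push_cast
  ring

section InvariantRegion

variable {p : ℕ} {K : ℝ}

noncomputable def upperBoundary (p : ℕ) (K u : ℝ) : ℝ := -u ^ p - K / u ^ (p - 1)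

/-- The `u`-component of the exterior normal `(1, upperNormal p K u)` to the curve
`η = upperBoundary p K u`, i.e. of the gradient of `η - upperBoundary p K u`. -/
noncomputable def upperNormal (p : ℕ) (K u : ℝ) : ℝ := p * u ^ (p - 1) + K * (1 - p) / u ^ p

theorem hasDerivAt_upperBoundary (hp : p ≠ 0) (K : ℝ) {u : ℝ} (hu : u ≠ 0) :
    HasDerivAt (upperBoundary p K) (-upperNormal p K u) u := by
  have h : HasDerivAt (fun u => -u ^ p - K / u ^ (p - 1))
      (-(p * u ^ (p - 1)) - K * (1 - p) / u ^ p) u :=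
    (hasDerivAt_pow p u).neg.sub (hasDerivAt_div_pow_sub_one hp K hu)
  exact h.congr_deriv (by rw [upperNormal]; ring)

theorem upperBoundary_lt (hpe : Even p) (hp : p ≠ 0) (hK : 0 < K) {u : ℝ} (hu : u < 0) :
    -u ^ p < upperBoundary p K u := by
  have := div_neg_of_pos_of_neg hK (pow_sub_one_neg_of_even hpe hp hu)
  unfold upperBoundary
  linarith

theorem inner_upperNormal_eq (K : ℝ) {u : ℝ} (hu : u ≠ 0) :
    1 * 1 + (upperBoundary p K u + u ^ p) * upperNormal p K u
      = 1 - K * p - K ^ 2 * (1 - p) / u ^ (2 * p - 1) := by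
  have hsplit : u ^ (2 * p - 1) = u ^ (p - 1) * u ^ p := by rw [← pow_add]; congr 1; omega
  have : u ^ (p - 1) ≠ 0 := pow_ne_zero _ hu
  have : u ^ p ≠ 0 := pow_ne_zero _ hu
  rw [hsplit, upperBoundary, upperNormal]
  field_simp
  ring

theorem inner_upperNormal_neg (hp : p ≠ 0) (hK : 1 / (p : ℝ) < K) {u : ℝ}
    (hu : u < 0) : 1 - K * p - K ^ 2 * (1 - p) / u ^ (2 * p - 1) < 0 := by
  have hp₀ : (0 : ℝ) < p := Nat.cast_pos.2 (Nat.pos_of_ne_zero hp)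
  have hKp : 1 < K * p := by rwa [div_lt_iff₀ hp₀] at hK
  have hodd : u ^ (2 * p - 1) < 0 := pow_sub_one_neg_of_even (even_two_mul p) (by omega) hu
  have hp₁ : (1 : ℝ) - p ≤ 0 := by
    have : (1 : ℝ) ≤ p := Nat.one_le_cast.2 (Nat.pos_of_ne_zero hp)
    linarith
  have := div_nonneg_of_nonpos (mul_nonpos_of_nonneg_of_nonpos (sq_nonneg K) hp₁) hodd.le
  linarith

variable {a b : ℝ} {η u : ℝ → ℝ}

theorem neg_pow_le_of_flow
    (hflow : ∀ t ∈ Icc a b, HasDerivAt η 1 t ∧ HasDerivAt u (η t + u t ^ p) t)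
    (ha : -u a ^ p ≤ η a) : ∀ t ∈ Icc a b, -u t ^ p ≤ η t := by
  have key := nonneg_of_hasDerivAt_pos_of_eq_zero (g := fun t => η t + u t ^ p)
    (fun t ht => (hflow t ht).1.add ((hflow t ht).2.pow p)) (by linarith)
    (fun t _ h => by simp [h])
  exact fun t ht => by linarith [key t ht]

theorem le_upperBoundary_of_flow (hp : p ≠ 0) (hK : 1 / (p : ℝ) < K)
    (hflow : ∀ t ∈ Icc a b, HasDerivAt η 1 t ∧ HasDerivAt u (η t + u t ^ p) t)
    (hneg : ∀ t ∈ Icc a b, u t < 0) (ha : η a ≤ upperBoundary p K (u a)) :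
    ∀ t ∈ Icc a b, η t ≤ upperBoundary p K (u t) := by
  have key := nonneg_of_hasDerivAt_pos_of_eq_zero
    (g := fun t => upperBoundary p K (u t) - η t)
    (fun t ht => ((hasDerivAt_upperBoundary hp K (hneg t ht).ne).comp t (hflow t ht).2).sub
      (hflow t ht).1)
    (by linarith)
    (fun t ht h => by
      have hη : η t = upperBoundary p K (u t) := by linarith
      have := inner_upperNormal_neg hp hK (hneg t ht)
      rw [← inner_upperNormal_eq K (hneg t ht).ne, ← hη] at this
      linarith)
  exact fun t ht => by linarith [key t ht]

end InvariantRegion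

/-- For p ≥ 2 even and K > 1/p, the region
B = {(u,η) : u < 0, -u^p ≤ η ≤ -u^p - K/u^{p-1}} is positively invariant for
η' = 1, u' = η + u^p: on η = -u^p the field is (1,0), and on the other boundary
the inner product with the exterior normal equals 1 - Kp - K²(1-p)/u^{2p-1} < 0. -/
theorem stmt6 (p : ℕ) (hp : 2 ≤ p) (hpe : Even p) (K : ℝ) (hK : 1/(p:ℝ) < K) :
    (∀ u : ℝ, u < 0 → (-u ^ p) + u ^ p = 0 ∧ -u ^ p < -u ^ p - K / u ^ (p-1)) ∧
    (∀ u : ℝ, u < 0 →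
      (1:ℝ) * 1 + ((-u ^ p - K / u ^ (p-1)) + u ^ p) * ((p:ℝ) * u ^ (p-1) + K*(1-(p:ℝ))/u ^ p)
        = 1 - K*(p:ℝ) - K^2*(1-(p:ℝ))/u ^ (2*p-1) ∧
      1 - K*(p:ℝ) - K^2*(1-(p:ℝ))/u ^ (2*p-1) < 0) ∧
    (∀ (T : ℝ) (η u : ℝ → ℝ), 0 ≤ T →
      (∀ t ∈ Set.Icc 0 T, HasDerivAt η 1 t ∧ HasDerivAt u (η t + u t ^ p) t) →
      (∀ t ∈ Set.Icc 0 T, u t < 0) →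
      (-u 0 ^ p ≤ η 0 ∧ η 0 ≤ -u 0 ^ p - K / u 0 ^ (p-1)) →
      ∀ t ∈ Set.Icc 0 T, -u t ^ p ≤ η t ∧ η t ≤ -u t ^ p - K / u t ^ (p-1)) := by
  have hp₀ : p ≠ 0 := by omega
  have hKpos : 0 < K := (one_div_pos.2 (Nat.cast_pos.2 (by omega))).trans hK
  refine ⟨fun u hu => ⟨by ring, upperBoundary_lt hpe hp₀ hKpos hu⟩,
    fun u hu => ⟨inner_upperNormal_eq K hu.ne, inner_upperNormal_neg hp₀ hK hu⟩, ?_⟩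
  intro T η u _ hflow hneg h₀ t ht
  exact ⟨neg_pow_le_of_flow hflow h₀.1 t ht,
    le_upperBoundary_of_flow hp₀ hK hflow hneg h₀.2 t ht⟩
end

section
/- Let M > 0 and let η₀'(u) = 2/(4η₀(u) − (φ''(1)/2)u²) denote the derivative of the distinguished inner solution with φ''(1) < 0, so that η₀'(u) > 0 for u ≤ 0. For the inner equation dη/du = μ²(1+φ(1+μu)) / (1 + 2μ²η + φ(1+μu)(2μ²η − 1)) with φ C¹ satisfying φ(1+s) = 1 + (φ''(1)/2)s² + O(s³) for s ≤ 0, the quantity E₁ := 1 − φ(1+μu) + 2μ²(1+φ(1+μu))η evaluated at η = η₀(u) + Kμ M(u) equals 2μ²/η₀'(u) + 4Kμ³M(u) + g(u;μ), where g(u;μ) := −φ(1+μu) + 1 + (φ''(1)/2)(μu)² + 2μ²(φ(1+μu) − 1)(η₀(u) + KμM(u)) satisfies, for u ∈ [u*, −u₀] with |μu| ≤ 1 and some constant C independent of K, the bound |g(u;μ)| ≤ C|μu|³(1 + K|μu|²). -/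
/-!
Since `φ (1 + s) - 1 = O(s²)`, the correction `2μ²(φ (1 + μu) - 1)(η₀ u + Kμ M u)` is
`O(μ² (μu)² (u² + Kμ|u|³)) = O(|μu|⁴ + K |μu|⁵)`; together with the `O(|μu|³)` Taylor remainder
this is `O(|μu|³ (1 + K |μu|²))` as soon as `|μu| ≤ 1`.
-/

open Set

theorem abs_le_of_abs_sub_half_mul_sq_le {y A C s : ℝ} (hC : 0 ≤ C) (hs : |s| ≤ 1)
    (h : |y - (A/2) * s^2| ≤ C * |s|^3) : |y| ≤ (|A|/2 + C) * |s|^2 := by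
  have hcube : |s|^3 ≤ |s|^2 := pow_le_pow_of_le_one (abs_nonneg s) hs (by norm_num)
  have hquad : |(A/2) * s^2| = |A|/2 * |s|^2 := by simp [abs_mul, abs_div]
  calc |y| = |(y - (A/2) * s^2) + (A/2) * s^2| := by ring_nf
    _ ≤ |y - (A/2) * s^2| + |(A/2) * s^2| := abs_add_le _ _
    _ ≤ C * |s|^2 + |A|/2 * |s|^2 := by
        rw [hquad]; gcongr; exact h.trans (mul_le_mul_of_nonneg_left hcube hC)
    _ = (|A|/2 + C) * |s|^2 := by ring

theorem abs_correction_le {q e μ u K B Cη : ℝ} (hμ : 0 ≤ μ) (hK : 0 ≤ K)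
    (hq : |q| ≤ B * |μ*u|^2) (he : |e| ≤ Cη * u^2) :
    |2*μ^2*q*(e + K*μ*(-(u^3)))| ≤ 2*B*(Cη*|μ*u|^4 + K*|μ*u|^5) := by
  have hshift : |e + K*μ*(-(u^3))| ≤ Cη * u^2 + K*μ*|u|^3 := by
    calc |e + K*μ*(-(u^3))| ≤ |e| + |K*μ*(-(u^3))| := abs_add_le _ _
      _ = |e| + K*μ*|u|^3 := by
          rw [abs_mul, abs_neg, abs_pow, abs_mul, abs_of_nonneg hK, abs_of_nonneg hμ]
      _ ≤ Cη * u^2 + K*μ*|u|^3 := by gcongr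
  calc |2*μ^2*q*(e + K*μ*(-(u^3)))| = 2*μ^2 * |q| * |e + K*μ*(-(u^3))| := by
        rw [abs_mul, abs_mul, abs_of_nonneg (by positivity : (0:ℝ) ≤ 2*μ^2)]
    _ ≤ 2*μ^2*(B * |μ*u|^2)*(Cη * u^2 + K*μ*|u|^3) := by
        gcongr
        exact mul_nonneg (by positivity) ((abs_nonneg q).trans hq)
    _ = 2*B*(Cη*|μ*u|^4 + K*|μ*u|^5) := by
        simp only [abs_mul, abs_of_nonneg hμ, ← sq_abs u]
        ring

theorem abs_remainder_le {y e A μ u K Cφ Cη : ℝ} (hCφ : 0 ≤ Cφ) (hCη : 0 ≤ Cη)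
    (hμ : 0 ≤ μ) (hK : 0 ≤ K) (hx : |μ*u| ≤ 1)
    (hy : |y - 1 - (A/2)*(μ*u)^2| ≤ Cφ * |μ*u|^3) (he : |e| ≤ Cη * u^2) :
    |-y + 1 + (A/2)*(μ*u)^2 + 2*μ^2*(y - 1)*(e + K*μ*(-(u^3)))|
      ≤ (Cφ + 2*(|A|/2 + Cφ)*Cη + 2*(|A|/2 + Cφ)) * |μ*u|^3 * (1 + K * |μ*u|^2) := by
  set x := μ*u
  have hcorr := abs_correction_le hμ hK (abs_le_of_abs_sub_half_mul_sq_le hCφ hx hy) he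
  have hquartic : |x|^4 ≤ |x|^3 := pow_le_pow_of_le_one (abs_nonneg x) hx (by norm_num)
  have hB : 0 ≤ |A|/2 + Cφ := by positivity
  calc |-y + 1 + (A/2)*x^2 + 2*μ^2*(y - 1)*(e + K*μ*(-(u^3)))|
      = |-(y - 1 - (A/2)*x^2) + 2*μ^2*(y - 1)*(e + K*μ*(-(u^3)))| := by ring_nf
    _ ≤ |y - 1 - (A/2)*x^2| + |2*μ^2*(y - 1)*(e + K*μ*(-(u^3)))| :=
        (abs_add_le _ _).trans_eq (by rw [abs_neg])
    _ ≤ Cφ * |x|^3 + 2*(|A|/2 + Cφ)*(Cη*|x|^3 + K*|x|^5) := by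
        gcongr
        exact hcorr.trans (by gcongr)
    _ ≤ (Cφ + 2*(|A|/2 + Cφ)*Cη + 2*(|A|/2 + Cφ)) * |x|^3 * (1 + K * |x|^2) := by
        nlinarith [pow_nonneg (abs_nonneg x) 3, pow_nonneg (abs_nonneg x) 5,
          mul_nonneg hCφ (mul_nonneg hK (pow_nonneg (abs_nonneg x) 5)),
          mul_nonneg (mul_nonneg hB hCη) (mul_nonneg hK (pow_nonneg (abs_nonneg x) 5))]

theorem stmt16_general (φ η₀ : ℝ → ℝ) (A : ℝ)
    (Cφ : ℝ) (hCφ : 0 < Cφ)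
    (hφ : ∀ s ∈ Set.Icc (-1:ℝ) 0, |φ (1 + s) - 1 - (A/2) * s^2| ≤ Cφ * |s|^3)
    (a Cη : ℝ) (ha : 1 < a) (hCη : 0 < Cη)
    (hη : ∀ u ≤ -a, |η₀ u| ≤ Cη * u^2) :
    (∀ (K μ u : ℝ) (M : ℝ → ℝ),
      1 - φ (1 + μ*u) + 2*μ^2*(1 + φ (1 + μ*u))*(η₀ u + K*μ*M u)
        = μ^2*(4*η₀ u - (A/2)*u^2) + 4*K*μ^3*M u +
          (-(φ (1 + μ*u)) + 1 + (A/2)*(μ*u)^2 +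
            2*μ^2*(φ (1 + μ*u) - 1)*(η₀ u + K*μ*M u))) ∧
    (∃ C : ℝ, 0 < C ∧ ∀ K ≥ (1:ℝ), ∀ μ > (0:ℝ), ∀ u₀ ≥ a, ∀ u ≤ -u₀, |μ*u| ≤ 1 →
      |(-(φ (1 + μ*u)) + 1 + (A/2)*(μ*u)^2 +
          2*μ^2*(φ (1 + μ*u) - 1)*(η₀ u + K*μ*(-(u^3))))|
        ≤ C * |μ*u|^3 * (1 + K * |μ*u|^2)) := by
  refine ⟨fun K μ u M => by ring, Cφ + 2*(|A|/2 + Cφ)*Cη + 2*(|A|/2 + Cφ), by positivity, ?_⟩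
  intro K hK μ hμ u₀ hu₀ u hu hx
  have hua : u ≤ -a := hu.trans (neg_le_neg hu₀)
  have hs : μ*u ∈ Icc (-1) 0 :=
    ⟨(abs_le.mp hx).1, mul_nonpos_of_nonneg_of_nonpos hμ.le (by linarith)⟩
  exact abs_remainder_le hCφ.le hCη.le hμ.le (by linarith) hx (hφ _ hs) (hη u hua)

/-- Key algebraic identity and remainder bound in the isolating block for the
inner equation (C¹ case): E₁ evaluated at η = η₀ + KμM equals
2μ²/η₀' + 4Kμ³M + g(u;μ), and |g(u;μ)| ≤ C|μu|³(1 + K|μu|²) with C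
independent of K. -/
theorem stmt16 (φ η₀ : ℝ → ℝ) (A : ℝ) (hA : A < 0)
    (hode : ∀ u ≤ (0:ℝ), HasDerivAt η₀ (2/(4 * η₀ u - (A/2) * u^2)) u)
    (hpos : ∀ u ≤ (0:ℝ), 0 < 2/(4 * η₀ u - (A/2) * u^2))
    (Cφ : ℝ) (hCφ : 0 < Cφ)
    (hφ : ∀ s ∈ Set.Icc (-1:ℝ) 0, |φ (1 + s) - 1 - (A/2) * s^2| ≤ Cφ * |s|^3)
    (a Cη : ℝ) (ha : 1 < a) (hCη : 0 < Cη)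
    (hη : ∀ u ≤ -a, |η₀ u| ≤ Cη * u^2) :
    (∀ (K μ u : ℝ) (M : ℝ → ℝ),
      1 - φ (1 + μ*u) + 2*μ^2*(1 + φ (1 + μ*u))*(η₀ u + K*μ*M u)
        = μ^2*(4*η₀ u - (A/2)*u^2) + 4*K*μ^3*M u +
          (-(φ (1 + μ*u)) + 1 + (A/2)*(μ*u)^2 +
            2*μ^2*(φ (1 + μ*u) - 1)*(η₀ u + K*μ*M u))) ∧
    (∃ C : ℝ, 0 < C ∧ ∀ K ≥ (1:ℝ), ∀ μ > (0:ℝ), ∀ u₀ ≥ a, ∀ u ≤ -u₀, |μ*u| ≤ 1 →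
      |(-(φ (1 + μ*u)) + 1 + (A/2)*(μ*u)^2 +
          2*μ^2*(φ (1 + μ*u) - 1)*(η₀ u + K*μ*(-(u^3))))|
        ≤ C * |μ*u|^3 * (1 + K * |μ*u|^2)) :=
  stmt16_general φ η₀ A Cφ hCφ hφ a Cη ha hCη hη
end
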